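/- Let (X, d, ≪, ≤, τ) and (Y, d̃, ≪̃, ≤̃, τ̃) be Lorentzian length spaces such that X is strongly causal and (Y, d̃) is locally compact, and let f : X → Y be a surjective distance homothetic map (with constant c > 0) that is locally causally Lipschitz. If γ : [a, b] → X is a maximal future directed causal curve from x to y, i.e. L_τ(γ) = τ(x, y), then f ∘ γ : [a, b] → Y is a maximal future directed causal curve from f(x) to f(y), i.e. L_τ̃(f ∘ γ) = τ̃(f(x), f(y)); moreover L_τ̃(f ∘ γ) = c·L_τ(γ). -/

import Mathlib

open scoped NNReal ENNReal
open Set Filter Topology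

/-- A Lorentzian pre-length space: a causal space `(X, ≪, ≤)` carried by a metric space `X`,
together with a time separation function `τ : X × X → [0, ∞]`. -/
structure LorentzianPreLengthSpace (X : Type*) [MetricSpace X] where
  /-- The chronological relation `≪`. -/
  chron : X → X → Prop
  /-- The causal relation `≤`. -/
  causal : X → X → Prop
  chron_trans : ∀ {x y z : X}, chron x y → chron y z → chron x z
  causal_refl : ∀ x : X, causal x x
  causal_trans : ∀ {x y z : X}, causal x y → causal y z → causal x z
  chron_imp_causal : ∀ {x y : X}, chron x y → causal x y
  /-- The time separation function `τ`. -/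
  tau : X → X → ℝ≥0∞
  tau_lsc : LowerSemicontinuous fun p : X × X => tau p.1 p.2
  tau_rev_triangle : ∀ {x y z : X}, causal x y → causal y z → tau x y + tau y z ≤ tau x z
  tau_eq_zero : ∀ {x y : X}, ¬ causal x y → tau x y = 0
  tau_pos_iff : ∀ {x y : X}, 0 < tau x y ↔ chron x y

namespace LorentzianPreLengthSpace

variable {X : Type*} [MetricSpace X] (L : LorentzianPreLengthSpace X)

/-- Chronological future `I⁺(x)`. -/
def Iplus (x : X) : Set X := {y | L.chron x y}

/-- Chronological past `I⁻(x)`. -/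
def Iminus (x : X) : Set X := {y | L.chron y x}

/-- Causal future `J⁺(x)`. -/
def Jplus (x : X) : Set X := {y | L.causal x y}

/-- Causal past `J⁻(x)`. -/
def Jminus (x : X) : Set X := {y | L.causal y x}

/-- A future directed causal curve on `[a,b]`: non-constant, Lipschitz, and order preserving
from the order of `[a,b]` to the causal relation. -/
def IsFutureCausalCurve (γ : ℝ → X) (a b : ℝ) : Prop :=
  a < b ∧ (∃ K : ℝ≥0, LipschitzOnWith K γ (Icc a b)) ∧
    (∃ s ∈ Icc a b, ∃ t ∈ Icc a b, γ s ≠ γ t) ∧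
    ∀ ⦃s⦄, s ∈ Icc a b → ∀ ⦃t⦄, t ∈ Icc a b → s < t → L.causal (γ s) (γ t)

/-- A future directed timelike curve on `[a,b]`. -/
def IsFutureTimelikeCurve (γ : ℝ → X) (a b : ℝ) : Prop :=
  a < b ∧ (∃ K : ℝ≥0, LipschitzOnWith K γ (Icc a b)) ∧
    (∃ s ∈ Icc a b, ∃ t ∈ Icc a b, γ s ≠ γ t) ∧
    ∀ ⦃s⦄, s ∈ Icc a b → ∀ ⦃t⦄, t ∈ Icc a b → s < t → L.chron (γ s) (γ t)

/-- The `τ`-length of a curve: the infimum over all partitions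
`a = t₀ < t₁ < ⋯ < t_N = b` (with `N ≥ 1`) of `∑ τ(γ(tᵢ), γ(tᵢ₊₁))`. -/
noncomputable def tauLength (γ : ℝ → X) (a b : ℝ) : ℝ≥0∞ :=
  ⨅ n : ℕ, ⨅ t : {t : Fin (n + 2) → ℝ // StrictMono t ∧ t 0 = a ∧ t (Fin.last (n + 1)) = b},
    ∑ i : Fin (n + 1), L.tau (γ (t.1 i.castSucc)) (γ (t.1 i.succ))

/-- Causal path connectedness: causally related (distinct) points are joined by a future
directed causal curve, chronologically related points by a future directed timelike curve. -/
def CausallyPathConnected : Prop :=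
  (∀ x y : X, L.causal x y → x ≠ y →
      ∃ γ : ℝ → X, ∃ a b : ℝ, L.IsFutureCausalCurve γ a b ∧ γ a = x ∧ γ b = y) ∧
  (∀ x y : X, L.chron x y →
      ∃ γ : ℝ → X, ∃ a b : ℝ, L.IsFutureTimelikeCurve γ a b ∧ γ a = x ∧ γ b = y)

/-- `p ≤_U q`: there is a future directed causal curve from `p` to `q` with image in `U`. -/
def CausalInside (U : Set X) (p q : X) : Prop :=
  ∃ γ : ℝ → X, ∃ a b : ℝ, L.IsFutureCausalCurve γ a b ∧ γ a = p ∧ γ b = q ∧ γ '' Icc a b ⊆ U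

/-- `U` is causally closed: the relation `≤_U` is closed under limits inside `U`. -/
def CausallyClosedNbhd (U : Set X) : Prop :=
  ∀ (p q : X) (pn qn : ℕ → X), (∀ n, L.CausalInside U (pn n) (qn n)) →
    Tendsto pn atTop (𝓝 p) → Tendsto qn atTop (𝓝 q) → p ∈ U → q ∈ U → L.CausalInside U p q

/-- Every point has a causally closed open neighborhood. -/
def LocallyCausallyClosed : Prop :=
  ∀ x : X, ∃ U : Set X, IsOpen U ∧ x ∈ U ∧ L.CausallyClosedNbhd U

/-- Localizability: every point has a localizing open neighborhood `Ω`. -/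
def Localizable : Prop :=
  ∀ x : X, ∃ Ω : Set X, IsOpen Ω ∧ x ∈ Ω ∧
    (∃ C : ℝ≥0, ∀ (γ : ℝ → X) (a b : ℝ), L.IsFutureCausalCurve γ a b →
        γ '' Icc a b ⊆ Ω → eVariationOn γ (Icc a b) ≤ C) ∧
    ∃ ω : X → X → ℝ≥0∞,
      ContinuousOn (fun pq : X × X => ω pq.1 pq.2) (Ω ×ˢ Ω) ∧
      (∀ p ∈ Ω, ∀ q ∈ Ω, ω p q ≠ ⊤) ∧
      (∀ p ∈ Ω, ∀ q ∈ Ω, ∀ r ∈ Ω, L.causal p q → L.causal q r → ω p q + ω q r ≤ ω p r) ∧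
      (∀ p ∈ Ω, ∀ q ∈ Ω, ¬ L.causal p q → ω p q = 0) ∧
      (∀ p ∈ Ω, ∀ q ∈ Ω, (0 < ω p q ↔ L.chron p q)) ∧
      (∀ y ∈ Ω, (L.Iplus y ∩ Ω).Nonempty ∧ (L.Iminus y ∩ Ω).Nonempty) ∧
      (∀ p ∈ Ω, ∀ q ∈ Ω, L.causal p q → p ≠ q →
        ∃ γ : ℝ → X, ∃ a b : ℝ, L.IsFutureCausalCurve γ a b ∧ γ a = p ∧ γ b = q ∧
          γ '' Icc a b ⊆ Ω ∧ L.tauLength γ a b = ω p q ∧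
          ∀ (σ : ℝ → X) (c e : ℝ), L.IsFutureCausalCurve σ c e → σ c = p → σ e = q →
            σ '' Icc c e ⊆ Ω → L.tauLength σ c e ≤ L.tauLength γ a b)

/-- `L` is a Lorentzian length space: causally path connected, locally causally closed,
localizable, and `τ` is the supremum of `τ`-lengths of connecting causal curves
(the supremum of the empty set being `0`). -/
def IsLengthSpace : Prop :=
  L.CausallyPathConnected ∧ L.LocallyCausallyClosed ∧ L.Localizable ∧
    ∀ x y : X, L.tau x y = sSup {ℓ : ℝ≥0∞ | ∃ γ : ℝ → X, ∃ a b : ℝ,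
      L.IsFutureCausalCurve γ a b ∧ γ a = x ∧ γ b = y ∧ ℓ = L.tauLength γ a b}

/-- `K⁺`: the smallest closed and transitive relation containing `J⁺`. -/
def Kplus : Set (X × X) :=
  ⋂₀ {R : Set (X × X) | IsClosed R ∧ (∀ a b c : X, (a, b) ∈ R → (b, c) ∈ R → (a, c) ∈ R) ∧
      {pq : X × X | L.causal pq.1 pq.2} ⊆ R}

/-- The Alexandrov topology, generated by the chronological diamonds. -/
def AlexandrovTopology : TopologicalSpace X :=
  TopologicalSpace.generateFrom {s : Set X | ∃ x y : X, s = L.Iplus x ∩ L.Iminus y}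

/-- Strong causality: the Alexandrov topology coincides with the metric topology. -/
def StronglyCausal : Prop :=
  L.AlexandrovTopology = (inferInstance : TopologicalSpace X)

/-- Non-total imprisonment: causal curves in a compact set have uniformly bounded
`d`-arclength. -/
def NonTotallyImprisoning : Prop :=
  ∀ K : Set X, IsCompact K → ∃ C : ℝ≥0, ∀ (γ : ℝ → X) (a b : ℝ),
    L.IsFutureCausalCurve γ a b → γ '' Icc a b ⊆ K → eVariationOn γ (Icc a b) ≤ C

/-- Global hyperbolicity. -/
def GloballyHyperbolic : Prop :=
  L.NonTotallyImprisoning ∧ ∀ x y : X, IsCompact (L.Jplus x ∩ L.Jminus y)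

/-- Causality: the causal relation is antisymmetric. -/
def Causal : Prop := ∀ x y : X, L.causal x y → L.causal y x → x = y

/-- Causal simplicity. -/
def CausallySimple : Prop :=
  L.Causal ∧ ∀ x : X, IsClosed (L.Jplus x) ∧ IsClosed (L.Jminus x)

/-- Distinguishing. -/
def Distinguishing : Prop :=
  (∀ x y : X, L.Iplus x = L.Iplus y → x = y) ∧ (∀ x y : X, L.Iminus x = L.Iminus y → x = y)

/-- Reflectivity. -/
def Reflective : Prop :=
  (∀ x y : X, L.Iplus x ⊆ L.Iplus y → L.Iminus y ⊆ L.Iminus x) ∧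
  (∀ x y : X, L.Iminus y ⊆ L.Iminus x → L.Iplus x ⊆ L.Iplus y)

/-- Causal continuity. -/
def CausallyContinuous : Prop := L.Distinguishing ∧ L.Reflective

/-- Stable causality: `K⁺` is antisymmetric. -/
def StablyCausal : Prop := ∀ x y : X, (x, y) ∈ L.Kplus → (y, x) ∈ L.Kplus → x = y

end LorentzianPreLengthSpace

/-- A distance homothetic map: `τ̃(f p, f q) = c · τ(p, q)` for some constant `c > 0`. -/
def DistanceHomothetic {X Y : Type*} [MetricSpace X] [MetricSpace Y]
    (LX : LorentzianPreLengthSpace X) (LY : LorentzianPreLengthSpace Y) (f : X → Y) : Prop :=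
  ∃ c : ℝ≥0, 0 < c ∧ ∀ p q : X, LY.tau (f p) (f q) = (c : ℝ≥0∞) * LX.tau p q

/-- A locally causally Lipschitz map. -/
def LocallyCausallyLipschitz {X Y : Type*} [MetricSpace X] [MetricSpace Y]
    (LX : LorentzianPreLengthSpace X) (f : X → Y) : Prop :=
  ∀ x : X, ∃ U : Set X, IsOpen U ∧ x ∈ U ∧ ∃ M : ℝ, 0 < M ∧
    ∀ x1 ∈ U, ∀ x2 ∈ U, LX.causal x1 x2 → dist (f x1) (f x2) ≤ M * dist x1 x2

/-! Strong causality makes `f` injective, since a point is determined by its chronological past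
and future and `f` preserves and reflects `≪`; it also gives arbitrarily small open
neighbourhoods that are intersections of chronological diamonds. On such a neighbourhood `S`
with `f '' S` inside a causally closed set `U`, `f` preserves `≤`: for `p ≤ q` in `S`
approximate `p` by `rₙ ≪ p`; a timelike curve from `f rₙ` to `f q` stays in `f '' S ⊆ U` by
surjectivity, and `f rₙ → f p` by the causal Lipschitz bound, so causal closedness of `U` gives
`f p ≤ f q`. A Lebesgue number for `[a, b]` chains these local facts along `γ`. Finally
`τ̃ = c·τ` termwise in every partition sum, so `L_τ̃(f ∘ γ) = c·L_τ(γ) = c·τ(x, y) = τ̃(f x, f y)`.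
-/

theorem forall_lt_of_forall_nhdsWithin_Icc {P : ℝ → ℝ → Prop} {a b : ℝ}
    (trans : ∀ {u v w}, P u v → P v w → P u w)
    (loc : ∀ u ∈ Icc a b, ∃ V ∈ 𝓝[Icc a b] u, ∀ s ∈ V, ∀ t ∈ V, s < t → P s t) :
    ∀ s ∈ Icc a b, ∀ t ∈ Icc a b, s < t → P s t := by
  choose V hV hPV using loc
  obtain ⟨δ, hδ, hleb⟩ := Metric.uniformity_basis_dist.lebesgue_number_lemma_nhdsWithin'
    isCompact_Icc hV
  have short : ∀ s ∈ Icc a b, ∀ t ∈ Icc a b, s < t → t - s < δ → P s t := by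
    intro s hs t ht hst hts
    obtain ⟨u, hu⟩ := hleb s hs
    have hs' : dist s s < δ := by rwa [dist_self]
    have ht' : dist s t < δ := by rwa [Real.dist_eq, abs_sub_comm, abs_of_pos (by linarith)]
    exact hPV u u.2 s (hu ⟨hs', hs⟩) t (hu ⟨ht', ht⟩) hst
  have chain : ∀ n : ℕ, ∀ s ∈ Icc a b, ∀ t ∈ Icc a b, s < t → t - s ≤ n * (δ / 2) → P s t := by
    intro n
    induction n with
    | zero => intro s _ t _ hst h; rw [Nat.cast_zero, zero_mul] at h; linarith
    | succ n ih =>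
      intro s hs t ht hst h
      by_cases hclose : t - s < δ
      · exact short s hs t ht hst hclose
      have hv : t - δ / 2 ∈ Icc a b := ⟨by linarith [hs.1], by linarith [ht.2]⟩
      refine trans (ih s hs _ hv (by linarith) ?_) (short _ hv t ht (by linarith) (by linarith))
      push_cast at h
      linarith
  intro s hs t ht hst
  obtain ⟨n, hn⟩ := exists_nat_ge ((t - s) / (δ / 2))
  exact chain n s hs t ht hst ((div_le_iff₀ (by positivity)).1 hn)

namespace LorentzianPreLengthSpace

variable {X : Type*} [MetricSpace X] (L : LorentzianPreLengthSpace X)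

theorem isOpen_Iplus (x : X) : IsOpen (L.Iplus x) := by
  have hI : L.Iplus x = L.tau x ⁻¹' Ioi 0 := ext fun _ => L.tau_pos_iff.symm
  exact hI ▸ (L.tau_lsc.comp (Continuous.prodMk_right x)).isOpen_preimage 0

theorem chron_of_chron_of_causal {x y z : X} (hxy : L.chron x y) (hyz : L.causal y z) :
    L.chron x z := by
  rw [← L.tau_pos_iff] at hxy ⊢
  exact hxy.trans_le (le_self_add.trans (L.tau_rev_triangle (L.chron_imp_causal
    (L.tau_pos_iff.1 hxy)) hyz))

variable {L}

theorem Localizable.exists_chron (hL : L.Localizable) (p : X) : ∃ w, L.chron w p := by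
  obtain ⟨Ω, -, hpΩ, -, ω, -, -, -, -, -, hΩ, -⟩ := hL p
  obtain ⟨w, hw, -⟩ := (hΩ p hpΩ).2
  exact ⟨w, hw⟩

theorem IsFutureCausalCurve.causal_endpoints {γ : ℝ → X} {a b : ℝ}
    (hγ : L.IsFutureCausalCurve γ a b) : L.causal (γ a) (γ b) :=
  hγ.2.2.2 (left_mem_Icc.2 hγ.1.le) (right_mem_Icc.2 hγ.1.le) hγ.1

theorem IsFutureTimelikeCurve.isFutureCausalCurve {γ : ℝ → X} {a b : ℝ}
    (hγ : L.IsFutureTimelikeCurve γ a b) : L.IsFutureCausalCurve γ a b :=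
  ⟨hγ.1, hγ.2.1, hγ.2.2.1, fun _ hs _ ht hst => L.chron_imp_causal (hγ.2.2.2 hs ht hst)⟩

theorem exists_seq_chron_tendsto (hL : L.CausallyPathConnected) {w p : X} (hwp : L.chron w p)
    {V : Set X} (hV : V ∈ 𝓝 p) :
    ∃ r : ℕ → X, (∀ n, r n ∈ V ∧ L.chron (r n) p) ∧ Tendsto r atTop (𝓝 p) := by
  obtain ⟨g, α, β, ⟨hαβ, ⟨K, hK⟩, -, hmono⟩, -, rfl⟩ := hL.2 w p hwp
  obtain ⟨t, -, htmem, htlim⟩ := exists_seq_strictMono_tendsto' hαβ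
  have hβ : β ∈ Icc α β := right_mem_Icc.2 hαβ.le
  have hgt : Tendsto (g ∘ t) atTop (𝓝 (g β)) :=
    (hK.continuousOn β hβ).tendsto.comp
      (tendsto_nhdsWithin_iff.2 ⟨htlim, .of_forall fun n => Ioo_subset_Icc_self (htmem n)⟩)
  obtain ⟨N, hN⟩ := eventually_atTop.1 (hgt.eventually hV)
  refine ⟨fun n => g (t (n + N)), fun n => ⟨hN _ (Nat.le_add_left N n), ?_⟩,
    hgt.comp (tendsto_add_atTop_nat N)⟩
  exact hmono (Ioo_subset_Icc_self (htmem _)) hβ (htmem _).2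

variable (L) in
def ChronConvex (S : Set X) : Prop :=
  ∀ ⦃r⦄, r ∈ S → ∀ ⦃q⦄, q ∈ S → L.Iplus r ∩ L.Iminus q ⊆ S

theorem chronConvex_diamond (u v : X) : L.ChronConvex (L.Iplus u ∩ L.Iminus v) :=
  fun _ hr _ hq _ hw => ⟨L.chron_trans hr.1 hw.1, L.chron_trans hw.2 hq.2⟩

theorem ChronConvex.inter {S T : Set X} (hS : L.ChronConvex S) (hT : L.ChronConvex T) :
    L.ChronConvex (S ∩ T) :=
  fun _ hr _ hq _ hw => ⟨hS hr.1 hq.1 hw, hT hr.2 hq.2 hw⟩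

theorem chronConvex_sInter {𝒮 : Set (Set X)} (h𝒮 : ∀ S ∈ 𝒮, L.ChronConvex S) :
    L.ChronConvex (⋂₀ 𝒮) :=
  fun _ hr _ hq _ hw S hS => h𝒮 S hS (hr S hS) (hq S hS) hw

theorem chronConvex_Iplus (u : X) : L.ChronConvex (L.Iplus u) :=
  fun _ hr _ _ _ hw => L.chron_trans hr hw.1

theorem StronglyCausal.exists_isOpen_chronConvex_subset (hL : L.StronglyCausal) {p : X}
    {B : Set X} (hB : B ∈ 𝓝 p) : ∃ G, IsOpen G ∧ L.ChronConvex G ∧ p ∈ G ∧ G ⊆ B := by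
  have hbasis := TopologicalSpace.isTopologicalBasis_of_subbasis hL.symm
  obtain ⟨G, ⟨𝒟, ⟨h𝒟fin, h𝒟⟩, rfl⟩, hpG, hGB⟩ := hbasis.mem_nhds_iff.1 hB
  refine ⟨⋂₀ 𝒟, hbasis.isOpen ⟨𝒟, ⟨h𝒟fin, h𝒟⟩, rfl⟩, chronConvex_sInter fun D hD => ?_, hpG, hGB⟩
  obtain ⟨u, v, rfl⟩ := h𝒟 hD
  exact chronConvex_diamond u v

theorem StronglyCausal.eq_of_chron_iff (hL : L.StronglyCausal) {p q : X}
    (hpast : ∀ r, L.chron r p ↔ L.chron r q) (hfut : ∀ r, L.chron p r ↔ L.chron q r) :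
    p = q := by
  have hdiamonds : {D | p ∈ D ∧ ∃ u v, D = L.Iplus u ∩ L.Iminus v} =
      {D | q ∈ D ∧ ∃ u v, D = L.Iplus u ∩ L.Iminus v} := by
    ext D
    refine and_congr_left ?_
    rintro ⟨u, v, rfl⟩
    exact and_congr (hpast u) (hfut v)
  have hnhds : @nhds X L.AlexandrovTopology p = @nhds X L.AlexandrovTopology q := by
    rw [AlexandrovTopology, TopologicalSpace.nhds_generateFrom, TopologicalSpace.nhds_generateFrom]
    exact congrArg (fun 𝒟 => ⨅ D ∈ 𝒟, 𝓟 D) hdiamonds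
  rw [hL] at hnhds
  exact Inseparable.eq hnhds

end LorentzianPreLengthSpace

section Maps

open LorentzianPreLengthSpace

variable {X Y : Type*} [MetricSpace X] [MetricSpace Y]
  {LX : LorentzianPreLengthSpace X} {LY : LorentzianPreLengthSpace Y} {f : X → Y}

theorem chron_map_iff_of_tau_map_eq_mul {c : ℝ≥0} (hc : 0 < c)
    (hhom : ∀ p q : X, LY.tau (f p) (f q) = (c : ℝ≥0∞) * LX.tau p q) (p q : X) :
    LY.chron (f p) (f q) ↔ LX.chron p q := by
  rw [← LY.tau_pos_iff, ← LX.tau_pos_iff, hhom, pos_iff_ne_zero, pos_iff_ne_zero,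
    mul_ne_zero_iff, and_iff_right (by exact_mod_cast hc.ne')]

theorem tauLength_comp_of_tau_map_eq_mul {c : ℝ≥0} (hc : 0 < c)
    (hhom : ∀ p q : X, LY.tau (f p) (f q) = (c : ℝ≥0∞) * LX.tau p q) (γ : ℝ → X) (a b : ℝ) :
    LY.tauLength (f ∘ γ) a b = (c : ℝ≥0∞) * LX.tauLength γ a b := by
  have hc0 : (c : ℝ≥0∞) ≠ 0 := by exact_mod_cast hc.ne'
  simp only [LorentzianPreLengthSpace.tauLength, ENNReal.mul_iInf_of_ne hc0 ENNReal.coe_ne_top,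
    Finset.mul_sum, Function.comp_apply, hhom]

theorem injective_of_chron_map_iff (hL : LX.StronglyCausal)
    (hchron : ∀ p q, LY.chron (f p) (f q) ↔ LX.chron p q) : Function.Injective f := by
  intro p q hpq
  refine hL.eq_of_chron_iff (fun r => ?_) (fun r => ?_)
  · rw [← hchron, hpq, hchron]
  · rw [← hchron, hpq, hchron]

theorem LocallyCausallyLipschitz.tendsto_comp (hlip : LocallyCausallyLipschitz LX f)
    {p : X} {r : ℕ → X} (hr : ∀ n, LX.causal (r n) p) (hlim : Tendsto r atTop (𝓝 p)) :
    Tendsto (f ∘ r) atTop (𝓝 (f p)) := by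
  obtain ⟨W, hWo, hpW, M, -, hM⟩ := hlip p
  refine tendsto_iff_dist_tendsto_zero.2 (squeeze_zero' (.of_forall fun _ => dist_nonneg)
    ?_ (by simpa using (tendsto_iff_dist_tendsto_zero.1 hlim).const_mul M))
  filter_upwards [hlim.eventually (hWo.mem_nhds hpW)] with n hn
  exact hM _ hn _ hpW (hr n)

theorem causalInside_of_chron_of_chronConvex (hY : LY.CausallyPathConnected)
    (hsurj : Function.Surjective f) (hchron : ∀ p q, LY.chron (f p) (f q) ↔ LX.chron p q)
    {S : Set X} {U : Set Y} (hS : LX.ChronConvex S) (hSU : MapsTo f S U) {r q : X}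
    (hr : r ∈ S) (hq : q ∈ S) (hrq : LX.chron r q) : LY.CausalInside U (f r) (f q) := by
  obtain ⟨σ, α, β, hσ, hσα, hσβ⟩ := hY.2 _ _ ((hchron r q).2 hrq)
  refine ⟨σ, α, β, hσ.isFutureCausalCurve, hσα, hσβ, ?_⟩
  rintro _ ⟨s, hs, rfl⟩
  rcases hs.1.eq_or_lt with rfl | hαs
  · exact hσα ▸ hSU hr
  rcases hs.2.eq_or_lt with rfl | hsβ
  · exact hσβ ▸ hSU hq
  obtain ⟨w, hw⟩ := hsurj (σ s)
  have hrw : LY.chron (f r) (f w) :=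
    hσα ▸ hw ▸ hσ.2.2.2 (left_mem_Icc.2 hσ.1.le) hs hαs
  have hwq : LY.chron (f w) (f q) :=
    hσβ ▸ hw ▸ hσ.2.2.2 hs (right_mem_Icc.2 hσ.1.le) hsβ
  exact hw ▸ hSU (hS hr hq ⟨(hchron r w).1 hrw, (hchron w q).1 hwq⟩)

theorem causal_map_of_chronConvex (hX : LX.CausallyPathConnected)
    (hY : LY.CausallyPathConnected) (hsurj : Function.Surjective f)
    (hchron : ∀ p q, LY.chron (f p) (f q) ↔ LX.chron p q) (hlip : LocallyCausallyLipschitz LX f)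
    {S : Set X} {U : Set Y} (hSo : IsOpen S) (hS : LX.ChronConvex S) (hSU : MapsTo f S U)
    (hU : LY.CausallyClosedNbhd U) {p q : X} (hp : p ∈ S) (hq : q ∈ S)
    (hpast : ∃ w, LX.chron w p) (hpq : LX.causal p q) : LY.causal (f p) (f q) := by
  obtain ⟨w, hwp⟩ := hpast
  obtain ⟨r, hr, hlim⟩ := exists_seq_chron_tendsto hX hwp (hSo.mem_nhds hp)
  have hinside : ∀ n, LY.CausalInside U (f (r n)) (f q) := fun n =>
    causalInside_of_chron_of_chronConvex hY hsurj hchron hS hSU (hr n).1 hq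
      (LX.chron_of_chron_of_causal (hr n).2 hpq)
  obtain ⟨σ, α, β, hσ, hσα, hσβ, -⟩ := hU _ _ _ _ hinside
    (hlip.tendsto_comp (fun n => LX.chron_imp_causal (hr n).2) hlim)
    tendsto_const_nhds (hSU hp) (hSU hq)
  exact hσα ▸ hσβ ▸ hσ.causal_endpoints

/-- `f` is only controlled along causal pairs, so `S` is cut down to `I⁺(u)` for some `u ≪ p₀`
close to `p₀`: every point of `S` is then causally reachable from `u`. -/
theorem exists_chronConvex_nhds_mapsTo (hL : LX.StronglyCausal) (hX : LX.CausallyPathConnected)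
    (hlip : LocallyCausallyLipschitz LX f) {p₀ : X} (hpast : ∃ w, LX.chron w p₀) {U : Set Y}
    (hU : U ∈ 𝓝 (f p₀)) :
    ∃ S, IsOpen S ∧ LX.ChronConvex S ∧ p₀ ∈ S ∧ MapsTo f S U ∧
      ∃ M : ℝ, ∀ p ∈ S, ∀ q ∈ S, LX.causal p q → dist (f p) (f q) ≤ M * dist p q := by
  obtain ⟨W, hWo, hp₀W, M, hM, hlipW⟩ := hlip p₀
  obtain ⟨ε, hε, hεU⟩ := Metric.mem_nhds_iff.1 hU
  set ρ := ε / (3 * M)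
  obtain ⟨G, hGo, hGconv, hp₀G, hGsub⟩ := hL.exists_isOpen_chronConvex_subset
    (inter_mem (hWo.mem_nhds hp₀W) (Metric.ball_mem_nhds p₀ (by positivity : 0 < ρ)))
  obtain ⟨w, hwp₀⟩ := hpast
  obtain ⟨r, hr, -⟩ := exists_seq_chron_tendsto hX hwp₀ (hGo.mem_nhds hp₀G)
  set u := r 0
  have hfu : ∀ z ∈ G, LX.chron u z → dist (f u) (f z) ≤ M * dist u z := fun z hz huz =>
    hlipW u (hGsub (hr 0).1).1 z (hGsub hz).1 (LX.chron_imp_causal huz)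
  have hρ : ∀ z ∈ G, dist z p₀ < ρ := fun z hz => (hGsub hz).2
  refine ⟨LX.Iplus u ∩ G, (LX.isOpen_Iplus u).inter hGo, (chronConvex_Iplus u).inter hGconv,
    ⟨(hr 0).2, hp₀G⟩, fun z hz => hεU ?_, M, fun p hp q hq =>
      hlipW p (hGsub hp.2).1 q (hGsub hq.2).1⟩
  have huz : dist u z < 2 * ρ := by
    linarith [dist_triangle_right u z p₀, hρ u (hr 0).1, hρ z hz.2]
  calc dist (f z) (f p₀) ≤ dist (f u) (f z) + dist (f u) (f p₀) := dist_triangle_left _ _ _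
    _ ≤ M * dist u z + M * dist u p₀ := add_le_add (hfu z hz.2 hz.1) (hfu p₀ hp₀G (hr 0).2)
    _ < M * (2 * ρ) + M * ρ := by
      gcongr
      exact hρ u (hr 0).1
    _ = ε := by simp only [ρ]; field_simp; ring

theorem exists_nhds_causal_map_lipschitz (hL : LX.StronglyCausal)
    (hX : LX.CausallyPathConnected) (hpast : ∀ p, ∃ w, LX.chron w p)
    (hY : LY.CausallyPathConnected) (hYcc : LY.LocallyCausallyClosed)
    (hsurj : Function.Surjective f) (hchron : ∀ p q, LY.chron (f p) (f q) ↔ LX.chron p q)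
    (hlip : LocallyCausallyLipschitz LX f) (p₀ : X) :
    ∃ N ∈ 𝓝 p₀, ∃ M : ℝ, ∀ p ∈ N, ∀ q ∈ N, LX.causal p q →
      LY.causal (f p) (f q) ∧ dist (f p) (f q) ≤ M * dist p q := by
  obtain ⟨U, hUo, hU, hUcc⟩ := hYcc (f p₀)
  obtain ⟨S, hSo, hS, hp₀S, hSU, M, hM⟩ :=
    exists_chronConvex_nhds_mapsTo hL hX hlip (hpast p₀) (hUo.mem_nhds hU)
  exact ⟨S, hSo.mem_nhds hp₀S, M, fun p hp q hq hpq =>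
    ⟨causal_map_of_chronConvex hX hY hsurj hchron hlip hSo hS hSU hUcc hp hq (hpast p) hpq,
      hM p hp q hq hpq⟩⟩

theorem LorentzianPreLengthSpace.IsFutureCausalCurve.map (hf : Function.Injective f)
    (hloc : ∀ x, ∃ N ∈ 𝓝 x, ∃ M : ℝ, ∀ p ∈ N, ∀ q ∈ N, LX.causal p q →
      LY.causal (f p) (f q) ∧ dist (f p) (f q) ≤ M * dist p q)
    {γ : ℝ → X} {a b : ℝ} (hγ : LX.IsFutureCausalCurve γ a b) :
    LY.IsFutureCausalCurve (f ∘ γ) a b := by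
  obtain ⟨hab, ⟨K, hK⟩, ⟨s₀, hs₀, t₀, ht₀, hne⟩, hmono⟩ := hγ
  have hlocal : ∀ u ∈ Icc a b, ∃ V ∈ 𝓝[Icc a b] u, ∃ M : ℝ≥0,
      (∀ s ∈ V, ∀ t ∈ V, s < t → LY.causal (f (γ s)) (f (γ t))) ∧
      LipschitzOnWith (M * K) (f ∘ γ) V := by
    intro u hu
    obtain ⟨N, hN, M, hM⟩ := hloc (γ u)
    refine ⟨Icc a b ∩ γ ⁻¹' N, inter_mem self_mem_nhdsWithin (hK.continuousOn u hu hN),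
      M.toNNReal, fun s hs t ht hst => (hM _ hs.2 _ ht.2 (hmono hs.1 ht.1 hst)).1, ?_⟩
    refine LipschitzOnWith.of_dist_le_mul fun s hs t ht => ?_
    wlog hst : s ≤ t generalizing s t
    · rw [dist_comm, dist_comm s]
      exact this t ht s hs (le_of_not_ge hst)
    have hcausal : LX.causal (γ s) (γ t) := by
      rcases hst.eq_or_lt with rfl | hst
      · exact LX.causal_refl _
      · exact hmono hs.1 ht.1 hst
    calc dist (f (γ s)) (f (γ t)) ≤ M * dist (γ s) (γ t) := (hM _ hs.2 _ ht.2 hcausal).2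
      _ ≤ M.toNNReal * (K * dist s t) := by
        gcongr
        · exact Real.le_coe_toNNReal M
        · exact hK.dist_le_mul s hs.1 t ht.1
      _ = ↑(M.toNNReal * K) * dist s t := by push_cast; ring
  choose V hV M hcausal hlipV using hlocal
  refine ⟨hab, ?_, ⟨s₀, hs₀, t₀, ht₀, hf.ne hne⟩, ?_⟩
  · exact LocallyLipschitzOn.exists_lipschitzOnWith_of_compact isCompact_Icc
      fun u hu => ⟨_, _, hV u hu, hlipV u hu⟩
  · exact forall_lt_of_forall_nhdsWithin_Icc LY.causal_trans
      fun u hu => ⟨V u hu, hV u hu, hcausal u hu⟩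

end Maps

theorem distanceHomothetic_maximal_curves_general {X Y : Type*}
    [MetricSpace X] [MetricSpace Y]
    (LX : LorentzianPreLengthSpace X) (LY : LorentzianPreLengthSpace Y)
    (hX : LX.IsLengthSpace) (hY : LY.IsLengthSpace) (hXsc : LX.StronglyCausal)
    (f : X → Y) (hsurj : Function.Surjective f)
    (c : ℝ≥0) (hc : 0 < c)
    (hhom : ∀ p q : X, LY.tau (f p) (f q) = (c : ℝ≥0∞) * LX.tau p q)
    (hlip : LocallyCausallyLipschitz LX f)
    (x y : X) (γ : ℝ → X) (a b : ℝ)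
    (hγ : LX.IsFutureCausalCurve γ a b)
    (hmax : LX.tauLength γ a b = LX.tau x y) :
    LY.IsFutureCausalCurve (f ∘ γ) a b ∧
    LY.tauLength (f ∘ γ) a b = LY.tau (f x) (f y) ∧
    LY.tauLength (f ∘ γ) a b = (c : ℝ≥0∞) * LX.tauLength γ a b := by
  have hchron := chron_map_iff_of_tau_map_eq_mul hc hhom
  have hcurve : LY.IsFutureCausalCurve (f ∘ γ) a b :=
    hγ.map (injective_of_chron_map_iff hXsc hchron)
      (exists_nhds_causal_map_lipschitz hXsc hX.1 hX.2.2.1.exists_chron hY.1 hY.2.1 hsurj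
        hchron hlip)
  have hlength := tauLength_comp_of_tau_map_eq_mul hc hhom γ a b
  exact ⟨hcurve, by rw [hlength, hmax, hhom], hlength⟩

/-- a surjective, locally causally Lipschitz, distance homothetic map (with
constant `c > 0`) from a strongly causal Lorentzian length space to a Lorentzian length
space with locally compact metric sends maximal future directed causal curves to maximal
future directed causal curves, with `L_τ̃(f ∘ γ) = c · L_τ(γ)`. -/
theorem distanceHomothetic_maximal_curves {X Y : Type*}
    [MetricSpace X] [MetricSpace Y] [LocallyCompactSpace Y]
    (LX : LorentzianPreLengthSpace X) (LY : LorentzianPreLengthSpace Y)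
    (hX : LX.IsLengthSpace) (hY : LY.IsLengthSpace) (hXsc : LX.StronglyCausal)
    (f : X → Y) (hsurj : Function.Surjective f)
    (c : ℝ≥0) (hc : 0 < c)
    (hhom : ∀ p q : X, LY.tau (f p) (f q) = (c : ℝ≥0∞) * LX.tau p q)
    (hlip : LocallyCausallyLipschitz LX f)
    (x y : X) (γ : ℝ → X) (a b : ℝ)
    (hγ : LX.IsFutureCausalCurve γ a b) (hγa : γ a = x) (hγb : γ b = y)
    (hmax : LX.tauLength γ a b = LX.tau x y) :
    LY.IsFutureCausalCurve (f ∘ γ) a b ∧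
    LY.tauLength (f ∘ γ) a b = LY.tau (f x) (f y) ∧
    LY.tauLength (f ∘ γ) a b = (c : ℝ≥0∞) * LX.tauLength γ a b :=
  distanceHomothetic_maximal_curves_general LX LY hX hY hXsc f hsurj c hc hhom hlip x y γ a b hγ
    hmax
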